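/- arXiv:1708.07620 — 2 statements merged into one kernel-verified Lean document; each statement's English description precedes it below -/
import Mathlib

section
/- Under the SETUP, for every w ∈ S^⊥ the level set S_0(w) = {w' ∈ S^⊥ : D(w') ≤ D(w)} is compact. -/
noncomputable section

open scoped BigOperators

abbrev Evec (d : ℕ) := EuclideanSpace ℝ (Fin d)
abbrev ENvec (n d : ℕ) := PiLp 2 (fun _ : Fin n => EuclideanSpace ℝ (Fin d))

/-- Real inner product on `ℝ^d`. -/
def ip {d : ℕ} (x y : Evec d) : ℝ := inner ℝ x y

/-- Real inner product on `ℝ^{nd}`. -/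
def ipN {n d : ℕ} (x y : ENvec n d) : ℝ := inner ℝ x y

/-- `g` is a subgradient of `f` at `x`. -/
def IsSubgradientAt {d : ℕ} (f : Evec d → ℝ) (g x : Evec d) : Prop :=
  ∀ y, f x + ip g (y - x) ≤ f y

/-- `f` is strongly convex on `X` with parameter `θ`. -/
def StrongConvexOnWith {d : ℕ} (X : Set (Evec d)) (θ : ℝ) (f : Evec d → ℝ) : Prop :=
  ∀ x ∈ X, ∀ y ∈ X, ∀ g, IsSubgradientAt f g x →
    θ / 2 * ‖y - x‖ ^ 2 ≤ f y - f x - ip g (y - x)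

structure Setup (n d : ℕ) : Type where
  hn : 2 ≤ n
  hd : 1 ≤ d
  X : Fin n → Set (Evec d)
  f : Fin n → Evec d → ℝ
  θ : Fin n → ℝ
  hθ : ∀ i, 0 < θ i
  hXne : ∀ i, (X i).Nonempty
  hXclosed : ∀ i, IsClosed (X i)
  hXconv : ∀ i, Convex ℝ (X i)
  hfconv : ∀ i, ConvexOn ℝ Set.univ (f i)
  hstrong : ∀ i, StrongConvexOnWith (X i) (θ i) (f i)
  hzero : (0 : Evec d) ∈ interior (⋂ i, X i)
  xt : Fin n → Evec d → Evec d
  hxt_mem : ∀ i w, xt i w ∈ X i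
  hxt_max : ∀ i w, ∀ x ∈ X i, ip w x - f i x ≤ ip w (xt i w) - f i (xt i w)
  hxt_uniq : ∀ i w x, x ∈ X i →
    ip w x - f i x = ip w (xt i w) - f i (xt i w) → x = xt i w
  xstar : Evec d
  hxstar_mem : xstar ∈ ⋂ i, X i
  hxstar_min : ∀ x ∈ ⋂ i, X i, (∑ i, f i xstar) ≤ ∑ i, f i x

namespace Setup

variable {n d : ℕ} (P : Setup n d)

/-- Lipschitz constants `L_i = 1/θ_i`. -/
def Lip (i : Fin n) : ℝ := 1 / P.θ i

/-- `L = max_i L_i`. -/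
def Lmax : ℝ := ⨆ i, P.Lip i

/-- The conjugate function `d_i`. -/
def dconj (i : Fin n) (w : Evec d) : ℝ := ip w (P.xt i w) - P.f i (P.xt i w)

/-- The Fenchel dual function `D`. -/
def D (w : ENvec n d) : ℝ := ∑ i, P.dconj i (w i)

/-- The map `x̃ = ∇D`. -/
def xtv (w : ENvec n d) : ENvec n d := WithLp.toLp 2 (fun i => P.xt i (w i))

/-- The primal objective `F`. -/
def Fobj (x : ENvec n d) : ℝ := ∑ i, P.f i (x i)

/-- The optimal primal value. -/
def Fstar : ℝ := ∑ i, P.f i P.xstar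

/-- The primal optimum `𝐱* = (x*, …, x*)`. -/
def xstarv : ENvec n d := WithLp.toLp 2 (fun _ => P.xstar)

end Setup

/-- The subspace `S^⊥ = {w : w_1 + ⋯ + w_n = 0}`. -/
def Sperp (n d : ℕ) : Submodule ℝ (ENvec n d) where
  carrier := {w | ∑ i, w i = 0}
  add_mem' := by
    intro a b ha hb
    simp only [Set.mem_setOf_eq] at ha hb ⊢
    calc ∑ i, (a + b) i = ∑ i, (a i + b i) := rfl
    _ = (∑ i, a i) + ∑ i, b i := Finset.sum_add_distrib
    _ = 0 := by rw [ha, hb, add_zero]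
  zero_mem' := by
    simp only [Set.mem_setOf_eq]
    calc ∑ i, (0 : ENvec n d) i = ∑ _i : Fin n, (0 : Evec d) := rfl
    _ = 0 := by simp
  smul_mem' := by
    intro c a ha
    simp only [Set.mem_setOf_eq] at ha ⊢
    calc ∑ i, (c • a) i = ∑ i, c • a i := rfl
    _ = c • ∑ i, a i := Finset.smul_sum.symm
    _ = 0 := by rw [ha, smul_zero]

/-- Orthogonal projection onto `S^⊥`. -/
def projSperp {n d : ℕ} (x : ENvec n d) : ENvec n d :=
  (Submodule.orthogonalProjection (Sperp n d) x : ENvec n d)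

namespace Setup

variable {n d : ℕ} (P : Setup n d)

/-- The optimal dual value `D* = min_{w ∈ S^⊥} D(w)`. -/
def Dstar : ℝ := sInf (P.D '' (Sperp n d : Set (ENvec n d)))

end Setup

/-- Block action of `H ⊗ I_d` on `ℝ^{nd}`. -/
def blockMul {n d : ℕ} (H : Matrix (Fin n) (Fin n) ℝ) (w : ENvec n d) : ENvec n d :=
  WithLp.toLp 2 (fun i => ∑ j, H i j • w j)

/-- A time-varying sequence of weighted undirected graphs. -/
structure GraphSeq (n : ℕ) : Type where
  adj : ℕ → Fin n → Fin n → Bool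
  adj_symm : ∀ k i j, adj k i j = adj k j i
  adj_irrefl : ∀ k i, adj k i i = false
  adj_ne : ∀ k, ∃ i j, adj k i j = true
  h : ℕ → Fin n → Fin n → ℝ
  h_symm : ∀ k i j, h k i j = h k j i
  hlow : ℝ
  hhigh : ℝ
  hlow_pos : 0 < hlow
  h_mem : ∀ k i j, adj k i j = true → h k i j ∈ Set.Icc hlow hhigh

namespace GraphSeq

variable {n : ℕ} (Gs : GraphSeq n)

/-- The weight matrix `H_{G^k}`. -/
def H (k : ℕ) : Matrix (Fin n) (Fin n) ℝ :=
  Matrix.of fun i j =>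
    if i = j then ∑ l, (if Gs.adj k i l = true then Gs.h k i l else 0)
    else if Gs.adj k i j = true then -(Gs.h k i j) else 0

end GraphSeq

/-- The Fenchel dual gradient algorithm: step sizes, iterates, and their defining relations. -/
structure Algo (n d : ℕ) (P : Setup n d) (Gs : GraphSeq n) : Type where
  δ : ℝ
  hδ_pos : 0 < δ
  hδ : ∀ k, (δ • Matrix.diagonal (fun i => (P.Lip i)⁻¹) - Gs.H k).PosSemidef
  αlo : ℝ
  αhi : ℝ
  hαlo : 0 < αlo
  hαhi : αhi < 2 / δ
  α : ℕ → ℝ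
  hα : ∀ k, α k ∈ Set.Icc αlo αhi
  w : ℕ → ENvec n d
  hw0 : w 0 ∈ Sperp n d
  hrec : ∀ k, w (k + 1) = w k - α k • blockMul (Gs.H k) (P.xtv (w k))

namespace Algo

variable {n d : ℕ} {P : Setup n d} {Gs : GraphSeq n} (A : Algo n d P Gs)

/-- Primal iterates `x^k = ∇D(w^k)`. -/
def x (k : ℕ) : ENvec n d := P.xtv (A.w k)

/-- The constant `ρ = min{α̲ − α̲²δ/2, ᾱ − ᾱ²δ/2}`. -/
def ρ : ℝ := min (A.αlo - A.αlo ^ 2 * A.δ / 2) (A.αhi - A.αhi ^ 2 * A.δ / 2)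

end Algo

/-! Each conjugate `d_i` is convex, hence continuous, and since a ball `B(0, r)` lies in every
`X_i`, testing the supremum defining `d_i(w)` at `x = r w / ‖w‖` gives the linear lower bound
`d_i(w) ≥ r ‖w‖ - max_{B(0,r)} f_i`. So `D` is continuous and coercive, and its sublevel sets,
intersected with the closed subspace `S^⊥`, are closed and bounded in a finite-dimensional space. -/

theorem PiLp.norm_le_sum_norm {ι : Type*} [Fintype ι] {β : ι → Type*}
    [∀ i, SeminormedAddCommGroup (β i)] (x : PiLp 2 β) : ‖x‖ ≤ ∑ i, ‖x i‖ := by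
  rw [PiLp.norm_eq_of_L2]
  calc √(∑ i, ‖x i‖ ^ 2) ≤ √((∑ i, ‖x i‖) ^ 2) :=
        Real.sqrt_le_sqrt (Finset.sum_sq_le_sq_sum_of_nonneg fun i _ => norm_nonneg _)
    _ = ∑ i, ‖x i‖ := Real.sqrt_sq (Finset.sum_nonneg fun i _ => norm_nonneg _)

theorem isClosed_Sperp {n d : ℕ} : IsClosed (Sperp n d : Set (ENvec n d)) :=
  isClosed_eq (continuous_finsetSum _ fun i _ => PiLp.continuous_apply 2 _ i) continuous_const

namespace Setup

variable {n d : ℕ} (P : Setup n d)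

theorem convexOn_dconj (i : Fin n) : ConvexOn ℝ Set.univ (P.dconj i) := by
  refine ⟨convex_univ, fun w₁ _ w₂ _ a b ha hb hab => ?_⟩
  set x := P.xt i (a • w₁ + b • w₂)
  have h₁ : ip w₁ x - P.f i x ≤ P.dconj i w₁ := P.hxt_max i w₁ x (P.hxt_mem i _)
  have h₂ : ip w₂ x - P.f i x ≤ P.dconj i w₂ := P.hxt_max i w₂ x (P.hxt_mem i _)
  have hip : ip (a • w₁ + b • w₂) x = a * ip w₁ x + b * ip w₂ x := by
    simp only [ip, inner_add_left, real_inner_smul_left]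
  calc P.dconj i (a • w₁ + b • w₂) = a * (ip w₁ x - P.f i x) + b * (ip w₂ x - P.f i x) := by
        rw [dconj, hip]; linear_combination P.f i x * hab
    _ ≤ a • P.dconj i w₁ + b • P.dconj i w₂ := by
        simp only [smul_eq_mul]; gcongr

theorem continuous_dconj (i : Fin n) : Continuous (P.dconj i) :=
  continuousOn_univ.mp ((P.convexOn_dconj i).continuousOn isOpen_univ)

theorem continuous_D : Continuous P.D :=
  continuous_finsetSum _ fun i _ => (P.continuous_dconj i).comp (PiLp.continuous_apply 2 _ i)

theorem exists_closedBall_subset_X : ∃ r > 0, ∀ i, Metric.closedBall (0 : Evec d) r ⊆ P.X i := by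
  obtain ⟨ε, hε, hball⟩ := Metric.mem_nhds_iff.mp (mem_interior_iff_mem_nhds.mp P.hzero)
  refine ⟨ε / 2, half_pos hε, fun i => ?_⟩
  exact ((Metric.closedBall_subset_ball (half_lt_self hε)).trans hball).trans
    (Set.iInter_subset _ i)

theorem mul_norm_sub_le_dconj {i : Fin n} {r M : ℝ} (hr : 0 ≤ r)
    (hX : Metric.closedBall 0 r ⊆ P.X i) (hM : ∀ x ∈ Metric.closedBall 0 r, P.f i x ≤ M)
    (w : Evec d) : r * ‖w‖ - M ≤ P.dconj i w := by
  -- the test point `r ‖w‖⁻¹ w` is also correct for `w = 0`, where `‖0‖⁻¹ = 0`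
  set x : Evec d := (r * ‖w‖⁻¹) • w
  have hx : x ∈ Metric.closedBall 0 r := by
    rw [mem_closedBall_zero_iff, norm_smul, Real.norm_of_nonneg (by positivity), mul_assoc]
    exact mul_le_of_le_one_right hr (inv_mul_le_one_of_le₀ le_rfl (norm_nonneg w))
  have hwx : ip w x = r * ‖w‖ := by
    rcases eq_or_ne w 0 with rfl | hw
    · simp [x, ip]
    · simp only [x, ip, real_inner_smul_right, real_inner_self_eq_norm_sq]
      field_simp
  have := P.hxt_max i w x (hX hx)
  have := hM x hx
  rw [dconj]
  linarith

theorem exists_mul_norm_sub_le_D : ∃ r > 0, ∃ C, ∀ w, r * ‖w‖ - C ≤ P.D w := by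
  obtain ⟨r, hr, hX⟩ := P.exists_closedBall_subset_X
  have hbdd : ∀ i, ∃ M, ∀ x ∈ Metric.closedBall (0 : Evec d) r, P.f i x ≤ M := fun i =>
    ((isCompact_closedBall 0 r).exists_bound_of_continuousOn
      (((P.hfconv i).continuousOn isOpen_univ).mono (Set.subset_univ _))).imp
      fun M hM x hx => (Real.le_norm_self _).trans (hM x hx)
  choose M hM using hbdd
  refine ⟨r, hr, ∑ i, M i, fun w => ?_⟩
  calc r * ‖w‖ - ∑ i, M i ≤ ∑ i, (r * ‖w i‖ - M i) := by
        rw [Finset.sum_sub_distrib, ← Finset.mul_sum]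
        gcongr
        exact PiLp.norm_le_sum_norm w
    _ ≤ P.D w := Finset.sum_le_sum fun i _ => P.mul_norm_sub_le_dconj hr.le (hX i) (hM i) (w i)

theorem isBounded_sublevel_D (c : ℝ) : Bornology.IsBounded {w | P.D w ≤ c} := by
  obtain ⟨r, hr, C, hC⟩ := P.exists_mul_norm_sub_le_D
  refine isBounded_iff_forall_norm_le.mpr ⟨(c + C) / r, fun w hw => ?_⟩
  rw [le_div_iff₀ hr]
  linarith [hC w, hw.out]

end Setup

theorem stmt3 {n d : ℕ} (P : Setup n d) :
    ∀ w ∈ Sperp n d, IsCompact {w' : ENvec n d | w' ∈ Sperp n d ∧ P.D w' ≤ P.D w} := by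
  intro w _
  exact Metric.isCompact_of_isClosed_isBounded
    (isClosed_Sperp.inter (isClosed_le P.continuous_D continuous_const))
    ((P.isBounded_sublevel_D (P.D w)).subset fun _ hw' => hw'.2)
end
end

section
/- Under the SETUP and the ALGORITHM, for every k ≥ 0 the iterates satisfy D(w^{k+1}) − D(w^k) ≤ −ρ ⟨∇D(w^k), (H_{G^k} ⊗ I_d) ∇D(w^k)⟩, where ρ = min{α̲ − α̲²δ/2, ᾱ − ᾱ²δ/2} ∈ (0, ∞). -/
noncomputable section

open scoped BigOperators

/-!
Each conjugate `d_i` is `L_i`-smooth: the maximiser `x̃_i(w)` of the `θ_i`-strongly concave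
objective `⟨w, ·⟩ - f_i` satisfies `⟨w, x - x̃_i(w)⟩ + θ_i/2 ‖x - x̃_i(w)‖² ≤ f_i x - f_i (x̃_i(w))`
on `X_i`, and Young's inequality turns this into the descent lemma
`D(w') ≤ D(w) + ⟨∇D(w), w' - w⟩ + ∑ᵢ L_i/2 ‖w'_i - w_i‖²`. Along the step `w' - w = -α (H ⊗ I) x`
the quadratic term is `α²/2 ‖(H ⊗ I) x‖²_{Λ_L}`, which `H ⪯ δ Λ_L⁻¹` and the Cauchy–Schwarz
inequality for the positive semidefinite Laplacian `H` bound by `α²δ/2 ⟨x, (H ⊗ I) x⟩`.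
Finally `α - α²δ/2 ≥ ρ` on `[α̲, ᾱ]` by concavity in `α`.
-/

open Set

open scoped InnerProductSpace

section StrongConvexity

variable {E : Type*} [NormedAddCommGroup E] [InnerProductSpace ℝ E] {X : Set E} {θ : ℝ}
  {f : E → ℝ} {w x₀ x : E}

lemma StrongConvexOn.inner_sub_add_le_of_isMaxOn (hf : StrongConvexOn X θ f)
    (hmax : IsMaxOn (fun y => ⟪w, y⟫_ℝ - f y) X x₀) (hx₀ : x₀ ∈ X) (hx : x ∈ X) :
    ⟪w, x - x₀⟫_ℝ + θ / 2 * ‖x - x₀‖ ^ 2 ≤ f x - f x₀ := by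
  have hsegment : ∀ t ∈ Ioo (0 : ℝ) 1,
      ⟪w, x - x₀⟫_ℝ + (1 - t) * (θ / 2 * ‖x - x₀‖ ^ 2) ≤ f x - f x₀ := by
    rintro t ⟨ht₀, ht₁⟩
    have hconv := hf.2 hx₀ hx (sub_nonneg.2 ht₁.le) ht₀.le (by ring)
    have hopt := hmax (hf.1 hx₀ hx (sub_nonneg.2 ht₁.le) ht₀.le (by ring))
    simp only [mem_ofPred_eq, inner_add_right, inner_smul_right, smul_eq_mul] at hconv hopt
    rw [norm_sub_rev] at hconv
    rw [inner_sub_right, ← mul_le_mul_iff_right₀ ht₀]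
    nlinarith
  have hlim : Filter.Tendsto (fun t : ℝ => ⟪w, x - x₀⟫_ℝ + (1 - t) * (θ / 2 * ‖x - x₀‖ ^ 2))
      (nhdsWithin 0 (Ioi 0)) (nhds (⟪w, x - x₀⟫_ℝ + (1 - 0) * (θ / 2 * ‖x - x₀‖ ^ 2))) :=
    (Continuous.tendsto (by fun_prop) _).mono_left nhdsWithin_le_nhds
  simpa using le_of_tendsto hlim (Filter.mem_of_superset (Ioo_mem_nhdsGT one_pos) hsegment)

/-- The conjugate of a `θ`-strongly convex function is `1/θ`-smooth. -/
lemma StrongConvexOn.inner_sub_le_of_isMaxOn (hf : StrongConvexOn X θ f) (hθ : 0 < θ)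
    (hmax : IsMaxOn (fun y => ⟪w, y⟫_ℝ - f y) X x₀) (hx₀ : x₀ ∈ X) (w' : E) (hx : x ∈ X) :
    ⟪w', x⟫_ℝ - f x ≤ ⟪w, x₀⟫_ℝ - f x₀ + ⟪x₀, w' - w⟫_ℝ + 1 / θ / 2 * ‖w' - w‖ ^ 2 := by
  have hkey := hf.inner_sub_add_le_of_isMaxOn hmax hx₀ hx
  have hcs : ⟪w' - w, x - x₀⟫_ℝ ≤ ‖w' - w‖ * ‖x - x₀‖ := real_inner_le_norm _ _
  have hyoung : ‖w' - w‖ * ‖x - x₀‖ - θ / 2 * ‖x - x₀‖ ^ 2 ≤ 1 / θ / 2 * ‖w' - w‖ ^ 2 := by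
    have hsq : 1 / θ / 2 * ‖w' - w‖ ^ 2 - (‖w' - w‖ * ‖x - x₀‖ - θ / 2 * ‖x - x₀‖ ^ 2)
        = (‖w' - w‖ - θ * ‖x - x₀‖) ^ 2 / (2 * θ) := by
      field_simp
      ring
    linarith [show 0 ≤ (‖w' - w‖ - θ * ‖x - x₀‖) ^ 2 / (2 * θ) by positivity]
  simp only [inner_sub_left, inner_sub_right, real_inner_comm x₀] at hkey hcs ⊢
  linarith

end StrongConvexity

namespace Matrix

/-- `xᵀ (diag (A 𝟙) - A) x = ½ ∑ᵢⱼ Aᵢⱼ (xᵢ - xⱼ)²`. -/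
lemma posSemidef_diagonal_sum_sub {ι : Type*} [Fintype ι] [DecidableEq ι]
    {A : Matrix ι ι ℝ} (hA : A.IsSymm) (hA₀ : ∀ i j, 0 ≤ A i j) :
    (diagonal (fun i => ∑ j, A i j) - A).PosSemidef := by
  refine posSemidef_iff_dotProduct_mulVec.2 ⟨?_, fun x => ?_⟩
  · simp only [isHermitian_iff_isSymm, IsSymm, transpose_sub, diagonal_transpose, hA.eq]
  have hswap : ∑ i, ∑ j, A i j * x j ^ 2 = ∑ i, ∑ j, A i j * x i ^ 2 := by
    rw [Finset.sum_comm]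
    exact Finset.sum_congr rfl fun i _ => Finset.sum_congr rfl fun j _ => by rw [hA.apply]
  have hform : star x ⬝ᵥ ((diagonal fun i => ∑ j, A i j) - A) *ᵥ x
      = (∑ i, ∑ j, A i j * (x i - x j) ^ 2) / 2 := by
    have hsq : ∀ i j, A i j * (x i - x j) ^ 2 = 2 * (x i * (A i j * x i))
        - 2 * (x i * (A i j * x j)) + (A i j * x j ^ 2 - A i j * x i ^ 2) := fun i j => by ring
    rw [star_trivial, sub_mulVec, dotProduct_sub]
    simp only [dotProduct, mulVec_diagonal]
    simp only [dotProduct, mulVec, Finset.sum_mul, Finset.mul_sum, hsq, Finset.sum_add_distrib,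
      Finset.sum_sub_distrib, hswap]
    simp only [← Finset.mul_sum]
    ring
  rw [hform]
  exact div_nonneg (Finset.sum_nonneg fun i _ => Finset.sum_nonneg fun j _ =>
    mul_nonneg (hA₀ i j) (sq_nonneg _)) zero_le_two

end Matrix

lemma min_le_sub_sq_mul_div_two {a b t δ : ℝ} (hδ : 0 ≤ δ) (ht : t ∈ Icc a b) :
    min (a - a ^ 2 * δ / 2) (b - b ^ 2 * δ / 2) ≤ t - t ^ 2 * δ / 2 := by
  have hconcave : ConcaveOn ℝ univ fun s : ℝ => s - s ^ 2 * δ / 2 := by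
    have hδ' : 0 ≤ δ / 2 := by positivity
    refine ((concaveOn_id convex_univ).sub ((Even.convexOn_pow even_two).smul hδ')).congr
      fun s _ => ?_
    simp only [Pi.sub_apply, id, smul_eq_mul]
    ring
  exact hconcave.min_le_of_mem_Icc (mem_univ a) (mem_univ b) ht

lemma ConvexOn.exists_isSubgradientAt {d : ℕ} {f : Evec d → ℝ} (hf : ConvexOn ℝ univ f)
    (x : Evec d) : ∃ g, IsSubgradientAt f g x := by
  have hcont : Continuous f := continuousOn_univ.1 (hf.continuousOn isOpen_univ)
  set epi : Set (Evec d × ℝ) := {p | p.1 ∈ univ ∧ f p.1 < p.2}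
  have hopen : IsOpen epi := by
    simpa [epi] using isOpen_lt (hcont.comp continuous_fst) continuous_snd
  obtain ⟨φ, hφ⟩ := geometric_hahn_banach_open_point hf.convex_strict_epigraph hopen
    (x := (x, f x)) (by simp)
  set ψ : Evec d →L[ℝ] ℝ := φ.comp (ContinuousLinearMap.inl ℝ (Evec d) ℝ)
  set c := φ (0, 1)
  have hφ_apply : ∀ y t, φ (y, t) = ψ y + t * c := fun y t => by
    rw [show (y, t) = (y, (0 : ℝ)) + t • ((0 : Evec d), (1 : ℝ)) by simp, map_add, map_smul,
      smul_eq_mul]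
    rfl
  have hc : c < 0 := by
    have := hφ (x, f x + 1) (by simp)
    rw [hφ_apply, hφ_apply] at this
    linarith
  have hsupport : ∀ y, ψ y + f y * c ≤ ψ x + f x * c := fun y => by
    have hlim : Filter.Tendsto (fun t => ψ y + t * c) (nhdsWithin (f y) (Ioi (f y)))
        (nhds (ψ y + f y * c)) := (Continuous.tendsto (by fun_prop) _).mono_left nhdsWithin_le_nhds
    refine le_of_tendsto hlim (eventually_nhdsWithin_of_forall fun t ht => ?_)
    simpa only [hφ_apply] using (hφ (y, t) ⟨trivial, ht⟩).le
  refine ⟨(-c)⁻¹ • (InnerProductSpace.toDual ℝ (Evec d)).symm ψ, fun y => ?_⟩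
  have hinner : ip ((-c)⁻¹ • (InnerProductSpace.toDual ℝ (Evec d)).symm ψ) (y - x)
      = (ψ y - ψ x) / (-c) := by
    rw [ip, real_inner_smul_left, InnerProductSpace.toDual_symm_apply, map_sub, inv_mul_eq_div]
  rw [hinner, ← le_sub_iff_add_le', div_le_iff₀ (neg_pos.2 hc)]
  linarith [hsupport y]

lemma StrongConvexOnWith.strongConvexOn {d : ℕ} {X : Set (Evec d)} {θ : ℝ} {f : Evec d → ℝ}
    (hs : StrongConvexOnWith X θ f) (hf : ConvexOn ℝ univ f) (hX : Convex ℝ X) :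
    StrongConvexOn X θ f := by
  refine ⟨hX, fun x hx y hy a b ha hb hab => ?_⟩
  obtain rfl : b = 1 - a := by linarith
  set z := a • x + (1 - a) • y
  obtain ⟨g, hg⟩ := hf.exists_isSubgradientAt z
  have hzX : z ∈ X := hX hx hy ha hb hab
  have hxz : x - z = (1 - a) • (x - y) := by module
  have hyz : y - z = -a • (x - y) := by module
  have hx' := hs z hzX x hx g hg
  have hy' := hs z hzX y hy g hg
  simp only [hxz, hyz, ip, norm_smul, real_inner_smul_right, Real.norm_eq_abs, abs_neg,
    abs_of_nonneg ha, abs_of_nonneg hb, mul_pow] at hx' hy'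
  simp only [smul_eq_mul]
  nlinarith [mul_le_mul_of_nonneg_left hx' ha, mul_le_mul_of_nonneg_left hy' hb]

lemma ipN_eq_sum {n d : ℕ} (a b : ENvec n d) : ipN a b = ∑ i, ip (a i) (b i) := by
  simp [ipN, PiLp.inner_apply, ip]

namespace Setup

variable {n d : ℕ} (P : Setup n d)

lemma isMaxOn_xt (i : Fin n) (w : Evec d) :
    IsMaxOn (fun x => inner ℝ w x - P.f i x) (P.X i) (P.xt i w) :=
  fun x hx => P.hxt_max i w x hx

lemma strongConvexOn (i : Fin n) : StrongConvexOn (P.X i) (P.θ i) (P.f i) :=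
  (P.hstrong i).strongConvexOn (P.hfconv i) (P.hXconv i)

lemma dconj_le (i : Fin n) (w w' : Evec d) :
    P.dconj i w' ≤ P.dconj i w + ip (P.xt i w) (w' - w) + P.Lip i / 2 * ‖w' - w‖ ^ 2 :=
  (P.strongConvexOn i).inner_sub_le_of_isMaxOn (P.hθ i) (P.isMaxOn_xt i w) (P.hxt_mem i w) w'
    (P.hxt_mem i w')

lemma Lip_pos (i : Fin n) : 0 < P.Lip i :=
  one_div_pos.2 (P.hθ i)

lemma D_le (w w' : ENvec n d) :
    P.D w' ≤ P.D w + ipN (P.xtv w) (w' - w) + ∑ i, P.Lip i / 2 * ‖w' i - w i‖ ^ 2 := by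
  rw [D, D, ipN_eq_sum, ← Finset.sum_add_distrib, ← Finset.sum_add_distrib]
  exact Finset.sum_le_sum fun i _ => P.dconj_le i (w i) (w' i)

end Setup

section BlockMul

variable {n d : ℕ}

open Matrix

@[simp]
lemma blockMul_apply (M : Matrix (Fin n) (Fin n) ℝ) (a : ENvec n d) (i : Fin n) :
    blockMul M a i = ∑ j, M i j • a j := rfl

lemma blockMul_add (M : Matrix (Fin n) (Fin n) ℝ) (a b : ENvec n d) :
    blockMul M (a + b) = blockMul M a + blockMul M b := by
  ext i : 1
  simp [smul_add, Finset.sum_add_distrib]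

lemma blockMul_smul (M : Matrix (Fin n) (Fin n) ℝ) (t : ℝ) (a : ENvec n d) :
    blockMul M (t • a) = t • blockMul M a := by
  ext i : 1
  simp [Finset.smul_sum, smul_comm t]

lemma blockMul_sub_left (M N : Matrix (Fin n) (Fin n) ℝ) (a : ENvec n d) :
    blockMul (M - N) a = blockMul M a - blockMul N a := by
  ext i : 1
  simp [sub_smul, Finset.sum_sub_distrib]

lemma blockMul_smul_left (t : ℝ) (M : Matrix (Fin n) (Fin n) ℝ) (a : ENvec n d) :
    blockMul (t • M) a = t • blockMul M a := by
  ext i : 1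
  simp [Finset.smul_sum, mul_smul]

lemma blockMul_diagonal (c : Fin n → ℝ) (a : ENvec n d) :
    blockMul (diagonal c) a = WithLp.toLp 2 (fun i => c i • a i) := by
  ext i : 1
  simp [diagonal_apply, ite_smul]

lemma ipN_blockMul (M : Matrix (Fin n) (Fin n) ℝ) (a b : ENvec n d) :
    ipN a (blockMul M b) = ∑ i, ∑ j, M i j * ip (a i) (b j) := by
  simp [ipN_eq_sum, ip, inner_sum, inner_smul_right]

lemma ipN_blockMul_comm {M : Matrix (Fin n) (Fin n) ℝ} (hM : M.IsSymm) (a b : ENvec n d) :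
    ipN a (blockMul M b) = ipN b (blockMul M a) := by
  rw [ipN_blockMul, ipN_blockMul, Finset.sum_comm]
  refine Finset.sum_congr rfl fun j _ => Finset.sum_congr rfl fun i _ => ?_
  rw [← hM.apply i j, ip, ip, real_inner_comm]

/-- The quadratic form of `M ⊗ I_d` splits over the `d` coordinates into quadratic forms
of `M`. -/
lemma ipN_blockMul_self_nonneg {M : Matrix (Fin n) (Fin n) ℝ} (hM : M.PosSemidef)
    (a : ENvec n d) : 0 ≤ ipN a (blockMul M a) := by
  have hsplit : ipN a (blockMul M a)
      = ∑ c : Fin d, (fun i => a i c) ⬝ᵥ M *ᵥ (fun i => a i c) :=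
    calc ipN a (blockMul M a) = ∑ i, ∑ c : Fin d, ∑ j, M i j * (a i c * a j c) := by
          simp only [ipN_blockMul, ip, PiLp.inner_apply, RCLike.inner_apply, conj_trivial,
            Finset.mul_sum]
          exact Finset.sum_congr rfl fun i _ => by rw [Finset.sum_comm]; simp only [mul_comm]
      _ = ∑ c : Fin d, (fun i => a i c) ⬝ᵥ M *ᵥ (fun i => a i c) := by
          rw [Finset.sum_comm]
          simp only [dotProduct, mulVec, Finset.mul_sum]
          refine Finset.sum_congr rfl fun c _ => Finset.sum_congr rfl fun i _ =>
            Finset.sum_congr rfl fun j _ => by ring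
  rw [hsplit]
  exact Finset.sum_nonneg fun c _ => by simpa using hM.dotProduct_mulVec_nonneg (fun i => a i c)

lemma sq_ipN_blockMul_le {M : Matrix (Fin n) (Fin n) ℝ} (hM : M.PosSemidef) (a b : ENvec n d) :
    ipN a (blockMul M b) ^ 2 ≤ ipN a (blockMul M a) * ipN b (blockMul M b) := by
  have hquad : ∀ t : ℝ, 0 ≤ ipN a (blockMul M a) * (t * t) + 2 * ipN a (blockMul M b) * t
      + ipN b (blockMul M b) := fun t => by
    have hnonneg := ipN_blockMul_self_nonneg hM (t • a + b)
    have hba := ipN_blockMul_comm (isHermitian_iff_isSymm.1 hM.isHermitian) b a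
    rw [blockMul_add, blockMul_smul] at hnonneg
    simp only [ipN, inner_add_left, inner_add_right, real_inner_smul_left,
      real_inner_smul_right] at hnonneg hba ⊢
    rw [hba] at hnonneg
    linarith
  have hdiscrim := discrim_le_zero hquad
  rw [discrim] at hdiscrim
  linarith

lemma sum_mul_norm_sq_blockMul_le {M : Matrix (Fin n) (Fin n) ℝ} (hM : M.PosSemidef)
    {L : Fin n → ℝ} (hL : ∀ i, 0 < L i) {δ : ℝ} (hδ₀ : 0 ≤ δ)
    (hδ : (δ • diagonal (fun i => (L i)⁻¹) - M).PosSemidef) (x : ENvec n d) :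
    ∑ i, L i * ‖blockMul M x i‖ ^ 2 ≤ δ * ipN x (blockMul M x) := by
  set u := blockMul M x
  set T := ∑ i, L i * ‖u i‖ ^ 2
  -- With `b = Λ_L u`: `T² = ⟨x, M b⟩² ≤ ⟨x, M x⟩ ⟨b, M b⟩ ≤ ⟨x, M x⟩ δ T`.
  set b : ENvec n d := WithLp.toLp 2 (fun i => L i • u i)
  have hbu : ipN b u = T := by
    simp only [ipN_eq_sum, ip, b, T, real_inner_smul_left, real_inner_self_eq_norm_sq]
  have hdiag : blockMul (diagonal fun i => (L i)⁻¹) b = u := by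
    ext i : 1
    simp [blockMul_diagonal, b, smul_smul, inv_mul_cancel₀ (hL i).ne']
  have hbb : ipN b (blockMul M b) ≤ δ * T := by
    have := ipN_blockMul_self_nonneg hδ b
    rw [blockMul_sub_left, blockMul_smul_left, hdiag] at this
    simp only [ipN, inner_sub_right, real_inner_smul_right] at this hbu ⊢
    rw [hbu] at this
    linarith
  have hxb : ipN x (blockMul M b) = T := by
    rw [ipN_blockMul_comm (isHermitian_iff_isSymm.1 hM.isHermitian), hbu]
  have hcs := sq_ipN_blockMul_le hM x b
  rw [hxb] at hcs
  have hq := ipN_blockMul_self_nonneg hM x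
  have hT : 0 ≤ T := Finset.sum_nonneg fun i _ => by have := hL i; positivity
  rcases hT.eq_or_lt with hT0 | hTpos
  · rw [← hT0]; positivity
  · nlinarith [mul_le_mul_of_nonneg_left hbb hq]

end BlockMul

namespace GraphSeq

variable {n : ℕ} (Gs : GraphSeq n)

def weightedAdj (k : ℕ) : Matrix (Fin n) (Fin n) ℝ :=
  Matrix.of fun i j => if Gs.adj k i j = true then Gs.h k i j else 0

lemma weightedAdj_isSymm (k : ℕ) : (Gs.weightedAdj k).IsSymm :=
  Matrix.IsSymm.ext fun i j => by simp only [weightedAdj, Matrix.of_apply, Gs.adj_symm k i j,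
    Gs.h_symm k i j]

lemma weightedAdj_nonneg (k : ℕ) (i j : Fin n) : 0 ≤ Gs.weightedAdj k i j := by
  simp only [weightedAdj, Matrix.of_apply]
  split_ifs with h
  · exact Gs.hlow_pos.le.trans (Gs.h_mem k i j h).1
  · exact le_rfl

lemma H_eq_diagonal_sub_weightedAdj (k : ℕ) :
    Gs.H k = Matrix.diagonal (fun i => ∑ j, Gs.weightedAdj k i j) - Gs.weightedAdj k := by
  ext i j
  by_cases hij : i = j
  · subst hij
    simp [H, weightedAdj, Gs.adj_irrefl k i]
  · simp only [H, weightedAdj, Matrix.sub_apply, Matrix.of_apply, Matrix.diagonal_apply_ne _ hij,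
      if_neg hij, zero_sub]
    split_ifs <;> simp

lemma posSemidef_H (k : ℕ) : (Gs.H k).PosSemidef := by
  rw [H_eq_diagonal_sub_weightedAdj]
  exact Matrix.posSemidef_diagonal_sum_sub (Gs.weightedAdj_isSymm k) (Gs.weightedAdj_nonneg k)

end GraphSeq

namespace Algo

variable {n d : ℕ} {P : Setup n d} {Gs : GraphSeq n} (A : Algo n d P Gs)

lemma D_succ_le (k : ℕ) :
    P.D (A.w (k + 1)) ≤ P.D (A.w k)
      - A.α k * ipN (P.xtv (A.w k)) (blockMul (Gs.H k) (P.xtv (A.w k)))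
      + A.α k ^ 2 / 2 * ∑ i, P.Lip i * ‖blockMul (Gs.H k) (P.xtv (A.w k)) i‖ ^ 2 := by
  set u := blockMul (Gs.H k) (P.xtv (A.w k))
  have hstep : A.w (k + 1) - A.w k = -A.α k • u := by rw [A.hrec k]; module
  have hcomp : ∀ i, A.w (k + 1) i - A.w k i = -A.α k • u i := fun i => by
    rw [← PiLp.sub_apply, hstep, PiLp.smul_apply]
  have hdescent := P.D_le (A.w k) (A.w (k + 1))
  rw [hstep, ipN, real_inner_smul_right, ← ipN] at hdescent
  simp only [hcomp, norm_smul, mul_pow, Real.norm_eq_abs, sq_abs] at hdescent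
  rw [Finset.mul_sum]
  convert hdescent using 2
  · ring
  · exact Finset.sum_congr rfl fun i _ => by ring

end Algo

theorem stmt5 {n d : ℕ} (P : Setup n d) (Gs : GraphSeq n) (A : Algo n d P Gs) :
    ∀ k : ℕ, P.D (A.w (k + 1)) - P.D (A.w k) ≤
      -A.ρ * ipN (P.xtv (A.w k)) (blockMul (Gs.H k) (P.xtv (A.w k))) := by
  intro k
  set x := P.xtv (A.w k)
  set q := ipN x (blockMul (Gs.H k) x)
  have hq : 0 ≤ q := ipN_blockMul_self_nonneg (Gs.posSemidef_H k) x
  have hweighted := sum_mul_norm_sq_blockMul_le (Gs.posSemidef_H k) P.Lip_pos A.hδ_pos.le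
    (A.hδ k) x
  have hρ : A.ρ ≤ A.α k - A.α k ^ 2 * A.δ / 2 := min_le_sub_sq_mul_div_two A.hδ_pos.le (A.hα k)
  calc P.D (A.w (k + 1)) - P.D (A.w k)
      ≤ -A.α k * q + A.α k ^ 2 / 2 * ∑ i, P.Lip i * ‖blockMul (Gs.H k) x i‖ ^ 2 := by
        linarith [A.D_succ_le k]
    _ ≤ -A.α k * q + A.α k ^ 2 / 2 * (A.δ * q) := by gcongr
    _ = -(A.α k - A.α k ^ 2 * A.δ / 2) * q := by ring
    _ ≤ -A.ρ * q := by gcongr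
end
end
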